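/- arXiv:2505.09481 — 7 statements merged into one kernel-verified Lean document; each statement's English description precedes it below -/
import Mathlib

section
/- Let p and q be distinct odd primes, let a, b be positive integers with 4 ∣ gcd(φ(p^a), φ(q^b)), set N = p^a·q^b, and let ζ ∈ ℂ be a primitive N-th root of unity. Then the Galois group of ℚ(ζ + ζ^{−1}) over ℚ is not cyclic. -/
/-!
`Gal(ℚ(ζ)/ℚ) ≅ (ℤ/N)ˣ` has order `φ(N) = φ(p^a) φ(q^b)` but exponent the Carmichael number
`λ(N) = lcm(λ(p^a), λ(q^b))`, which divides `lcm(φ(p^a), φ(q^b)) = φ(N) / gcd(φ(p^a), φ(q^b))`,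
hence `4 λ(N) ≤ φ(N)`. An automorphism fixing `ζ + ζ⁻¹` sends `ζ` to `ζ` or `ζ⁻¹`, so
`Gal(ℚ(ζ + ζ⁻¹)/ℚ)` is the quotient of `Gal(ℚ(ζ)/ℚ)` by a subgroup of order at most `2`. Were it
cyclic, its order would equal its exponent, which divides `λ(N)`, and then `φ(N) ≤ 2 λ(N)`.
-/

open Polynomial IntermediateField

theorem not_isCyclic_of_surjective_of_card_ker_le_two {G H : Type*} [Group G] [Group H]
    [Finite G] {f : G →* H} (hf : Function.Surjective f) (hker : Nat.card f.ker ≤ 2)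
    (hG : 2 * Monoid.exponent G < Nat.card G) : ¬ IsCyclic H := by
  intro hH
  have hcard : Nat.card G = Nat.card H * Nat.card f.ker := by
    rw [Subgroup.card_eq_card_quotient_mul_card_subgroup f.ker,
      Nat.card_congr (QuotientGroup.quotientKerEquivOfSurjective f hf).toEquiv]
  have hH_le : Nat.card H ≤ Monoid.exponent G := by
    rw [← IsCyclic.exponent_eq_card]
    exact Nat.le_of_dvd (Nat.pos_of_ne_zero Monoid.exponent_ne_zero_of_finite)
      (MonoidHom.exponent_dvd hf)
  nlinarith

open ArithmeticFunction in
theorem two_mul_carmichael_lt_totient {m n : ℕ} (hmn₀ : m * n ≠ 0) (hmn : m.Coprime n)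
    (h4 : 4 ∣ Nat.gcd m.totient n.totient) : 2 * carmichael (m * n) < (m * n).totient := by
  have hpos : 0 < (m * n).totient := Nat.totient_pos.mpr (Nat.pos_of_ne_zero hmn₀)
  have hdvd : carmichael (m * n) * 4 ∣ (m * n).totient := by
    rw [carmichael_mul hmn, Nat.totient_mul hmn, ← Nat.gcd_mul_lcm m.totient,
      mul_comm (Nat.gcd _ _)]
    refine mul_dvd_mul (Nat.lcm_dvd ?_ ?_) h4
    · exact (carmichael_dvd_totient m).trans (Nat.dvd_lcm_left _ _)
    · exact (carmichael_dvd_totient n).trans (Nat.dvd_lcm_right _ _)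
  have := Nat.le_of_dvd hpos hdvd
  omega

namespace IntermediateField

variable {K L : Type*} [Field K] [Field L] [Algebra K L]

theorem eq_or_eq_inv_of_mem_fixingSubgroup {E : IntermediateField K L} {x : L} (hx : x ≠ 0)
    (hxE : x + x⁻¹ ∈ E) {σ : L ≃ₐ[K] L} (hσ : σ ∈ E.fixingSubgroup) : σ x = x ∨ σ x = x⁻¹ := by
  have hfix : σ x + (σ x)⁻¹ = x + x⁻¹ := by
    simpa using (mem_fixingSubgroup_iff _ _).mp hσ _ hxE
  have hσx : σ x ≠ 0 := (map_ne_zero σ).mpr hx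
  -- `σ x` and `x` are both roots of `X² - (x + x⁻¹) X + 1`
  have : (σ x - x) * (σ x - x⁻¹) = 0 := by
    linear_combination σ x * hfix + mul_inv_cancel₀ hx - mul_inv_cancel₀ hσx
  rcases mul_eq_zero.mp this with h | h
  · exact .inl (sub_eq_zero.mp h)
  · exact .inr (sub_eq_zero.mp h)

theorem card_fixingSubgroup_le_two {E : IntermediateField K L} {x : L} (hx : x ≠ 0)
    (hxE : x + x⁻¹ ∈ E) (htop : Algebra.adjoin K {x} = ⊤) : Nat.card E.fixingSubgroup ≤ 2 := by
  let ev : E.fixingSubgroup → ({x, x⁻¹} : Set L) := fun σ =>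
    ⟨σ.1 x, eq_or_eq_inv_of_mem_fixingSubgroup hx hxE σ.2⟩
  have hev : Function.Injective ev := fun σ τ h => Subtype.ext <|
    AlgEquiv.coe_toAlgHom_injective <| AlgHom.ext_of_adjoin_eq_top htop fun y hy => by
      rw [Set.mem_singleton_iff.mp hy]; exact congrArg Subtype.val h
  calc Nat.card E.fixingSubgroup ≤ Nat.card ({x, x⁻¹} : Set L) :=
        Nat.card_le_card_of_injective ev hev
    _ ≤ 2 := by
        rw [Nat.card_coe_set_eq]
        exact (Set.ncard_insert_le _ _).trans (by simp)

end IntermediateField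

theorem Polynomial.ne_zero_of_irreducible_cyclotomic {K : Type*} [Field K] {n : ℕ}
    (hirr : Irreducible (cyclotomic n K)) : n ≠ 0 := by
  rintro rfl
  exact hirr.not_isUnit (by simp)

open ArithmeticFunction in
theorem IsCyclotomicExtension.not_isCyclic_gal {K L : Type*} [Field K] [Field L] [Algebra K L]
    {m n : ℕ} (hmn : m.Coprime n) (h4 : 4 ∣ Nat.gcd m.totient n.totient)
    [IsCyclotomicExtension {m * n} K L] (hirr : Irreducible (cyclotomic (m * n) K)) {ζ : L}
    (hζ : IsPrimitiveRoot ζ (m * n)) {E : IntermediateField K L} (hζE : ζ + ζ⁻¹ ∈ E) :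
    ¬ IsCyclic (E ≃ₐ[K] E) := by
  have hmn₀ := ne_zero_of_irreducible_cyclotomic hirr
  have : NeZero (m * n) := ⟨hmn₀⟩
  have := IsCyclotomicExtension.isAbelianGalois {m * n} K L
  have := IsCyclotomicExtension.finiteDimensional {m * n} K L
  let e := autEquivPow L hirr
  refine not_isCyclic_of_surjective_of_card_ker_le_two
    (AlgEquiv.restrictNormalHom_surjective L) ?_ ?_
  · rw [restrictNormalHom_ker]
    exact card_fixingSubgroup_le_two (hζ.ne_zero hmn₀) hζE (adjoin_primitive_root_eq_top hζ)
  · rw [Monoid.exponent_eq_of_mulEquiv e, Nat.card_congr e.toEquiv, ← carmichael_eq_exponent',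
      Nat.card_eq_fintype_card, ZMod.card_units_eq_totient]
    exact two_mul_carmichael_lt_totient hmn₀ hmn h4

theorem IsPrimitiveRoot.not_isCyclic_gal_adjoin_add_inv {K F : Type*} [Field K] [Field F]
    [Algebra K F] {m n : ℕ} (hmn : m.Coprime n) (h4 : 4 ∣ Nat.gcd m.totient n.totient)
    (hirr : Irreducible (cyclotomic (m * n) K)) {ζ : F} (hζ : IsPrimitiveRoot ζ (m * n)) :
    ¬ IsCyclic (K⟮ζ + ζ⁻¹⟯ ≃ₐ[K] K⟮ζ + ζ⁻¹⟯) := by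
  have : NeZero (m * n) := ⟨ne_zero_of_irreducible_cyclotomic hirr⟩
  have hint : IsIntegral K ζ := (hζ.isIntegral (NeZero.pos _)).tower_top
  have : IsCyclotomicExtension {m * n} K K⟮ζ⟯ := by
    change IsCyclotomicExtension {m * n} K K⟮ζ⟯.toSubalgebra
    rw [adjoin_simple_toSubalgebra_of_isAlgebraic hint.isAlgebraic]
    exact hζ.adjoin_isCyclotomicExtension K
  have hle : K⟮ζ + ζ⁻¹⟯ ≤ K⟮ζ⟯ := adjoin_simple_le_iff.mpr <|
    add_mem (mem_adjoin_simple_self K ζ) (inv_mem (mem_adjoin_simple_self K ζ))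
  have hζ' : IsPrimitiveRoot (AdjoinSimple.gen K ζ) (m * n) :=
    hζ.of_map_of_injective (algebraMap K⟮ζ⟯ F).injective
  rw [(restrictAlgEquiv hle).autCongr.isCyclic]
  refine IsCyclotomicExtension.not_isCyclic_gal hmn h4 hirr hζ' ?_
  simpa [mem_restrict] using mem_adjoin_simple_self K (ζ + ζ⁻¹)

theorem stmt_7_general (p q a b : ℕ) (hp : p.Prime) (hq : q.Prime) (hpq : p ≠ q)
    (h4 : 4 ∣ Nat.gcd (p ^ a).totient (q ^ b).totient)
    (ζ : ℂ) (hζ : IsPrimitiveRoot ζ (p ^ a * q ^ b)) :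
    ¬ IsCyclic (ℚ⟮ζ + ζ⁻¹⟯ ≃ₐ[ℚ] ℚ⟮ζ + ζ⁻¹⟯) :=
  hζ.not_isCyclic_gal_adjoin_add_inv (((Nat.coprime_primes hp hq).mpr hpq).pow a b) h4
    (cyclotomic.irreducible_rat (mul_pos (pow_pos hp.pos a) (pow_pos hq.pos b)))

/-- If `p, q` are distinct odd primes, `a, b ≥ 1` with `4 ∣ gcd(φ(p^a), φ(q^b))`,
`N = p^a·q^b`, and `ζ` is a primitive `N`-th root of unity in `ℂ`, then the Galois group
of `ℚ(ζ + ζ⁻¹)` over `ℚ` is not cyclic. -/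
theorem stmt_7 (p q a b : ℕ) (hp : p.Prime) (hq : q.Prime) (hpodd : Odd p)
    (hqodd : Odd q) (hpq : p ≠ q) (ha : 0 < a) (hb : 0 < b)
    (h4 : 4 ∣ Nat.gcd (p ^ a).totient (q ^ b).totient)
    (ζ : ℂ) (hζ : IsPrimitiveRoot ζ (p ^ a * q ^ b)) :
    ¬ IsCyclic (ℚ⟮ζ + ζ⁻¹⟯ ≃ₐ[ℚ] ℚ⟮ζ + ζ⁻¹⟯) :=
  stmt_7_general p q a b hp hq hpq h4 ζ hζ
end

section
/- Let N ≥ 3 be an integer and let ζ ∈ ℂ be a primitive N-th root of unity. Then the absolute value of the norm N_{ℚ(ζ)/ℚ}(ζ − ζ^{−1}) equals p if N = p^k or N = 2p^k for an odd prime p and k ≥ 1; it equals 4 if N = 2^k with k ≥ 2; and it equals 1 otherwise. -/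
/-!
Write `ζ - ζ⁻¹ = -ζ⁻¹ (ζ - 1)(-ζ - 1)`. The factor `-ζ⁻¹` is a root of unity, so its norm
is `±1`. Both `ζ` and `-ζ` are primitive roots of unity generating `ℚ(ζ)`, of orders `N` and
`M = 2N`, `N` or `N/2` according as `N` is odd, divisible by `4`, or `≡ 2 mod 4`; hence
`|N(ζ - ζ⁻¹)| = Φ_N(1) Φ_M(1)`. Finally `Φ_n(1) = p` for `n = p^k`, and `Φ_n(1) = 1` when
`n > 1` is not a prime power.
-/

open Polynomial IntermediateField

theorem Nat.not_isPrimePow_two_mul {m : ℕ} (hm : Odd m) (hm1 : m ≠ 1) :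
    ¬IsPrimePow (2 * m) := by
  intro h
  rcases (Nat.coprime_two_left.2 hm).isPrimePow_dvd_mul h |>.1 dvd_rfl with h2 | hm'
  · have := Nat.le_of_dvd two_pos h2
    obtain ⟨k, rfl⟩ := hm
    omega
  · have := Nat.le_of_dvd hm.pos hm'
    have := hm.pos
    omega

theorem Polynomial.eval_one_cyclotomic_of_not_isPrimePow {R : Type*} [Ring R] {n : ℕ}
    (hn : n ≠ 1) (h : ¬IsPrimePow n) : eval 1 (cyclotomic n R) = 1 :=
  eval_one_cyclotomic_not_prime_pow fun {p} hp k hpk => by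
    rcases k with _ | k
    · exact hn (by simpa using hpk.symm)
    · exact h (hpk ▸ hp.isPrimePow.pow k.succ_ne_zero)

theorem Algebra.abs_norm_eq_one_of_pow_eq_one {F L : Type*} [CommRing F] [LinearOrder F]
    [IsStrictOrderedRing F] [Ring L] [Algebra F L] {x : L} {n : ℕ} (hn : n ≠ 0)
    (hx : x ^ n = 1) : |Algebra.norm F x| = 1 :=
  (abs_pow_eq_one _ hn).1 (by rw [← map_pow, hx, map_one, abs_one])

theorem pow_two_mul_eq_one_of_neg_pow_eq_one {M : Type*} [Monoid M] [HasDistribNeg M] {x : M}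
    {l : ℕ} (h : (-x) ^ l = 1) : x ^ (2 * l) = 1 := by
  rw [pow_mul, ← neg_sq, ← pow_mul, mul_comm, pow_mul, h, one_pow]

namespace IsPrimitiveRoot

section Neg

variable {R : Type*} [CommRing R] {ζ : R} {n : ℕ}

theorem neg_of_odd [Nontrivial R] (hζ : IsPrimitiveRoot ζ n) (hn : Odd n)
    (h2 : ringChar R ≠ 2) :
    IsPrimitiveRoot (-ζ) (2 * n) := by
  have hord : orderOf (-1 : R) = 2 := by rw [orderOf_neg_one, if_neg h2]
  convert IsPrimitiveRoot.orderOf (-ζ)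
  rw [neg_eq_neg_one_mul, (Commute.all _ _).orderOf_mul_eq_mul_orderOf_of_coprime, hord,
    ← hζ.eq_orderOf]
  rw [hord, ← hζ.eq_orderOf]
  exact Nat.coprime_two_left.2 hn

theorem neg_of_four_dvd (hζ : IsPrimitiveRoot ζ n) (hn : 4 ∣ n) : IsPrimitiveRoot (-ζ) n := by
  have hn2 : 2 ∣ n := (by norm_num : 2 ∣ 4).trans hn
  refine ⟨by rw [(even_iff_two_dvd.2 hn2).neg_pow, hζ.pow_eq_one], fun l hl => ?_⟩
  have hl2 : Even l := by
    have := hn.trans (hζ.dvd_of_pow_eq_one _ (pow_two_mul_eq_one_of_neg_pow_eq_one hl))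
    exact even_iff_two_dvd.2 (Nat.dvd_of_mul_dvd_mul_left two_pos (by simpa using this))
  exact hζ.dvd_of_pow_eq_one l (by rwa [hl2.neg_pow] at hl)

theorem neg_of_two_mul_odd [NoZeroDivisors R] {m : ℕ} (hζ : IsPrimitiveRoot ζ (2 * m))
    (hm : Odd m) : IsPrimitiveRoot (-ζ) m := by
  have hζm : ζ ^ m = -1 :=
    (hζ.pow (Nat.mul_pos two_pos hm.pos) (mul_comm 2 m)).eq_neg_one_of_two_right
  refine ⟨by rw [hm.neg_pow, hζm, neg_neg], fun l hl => ?_⟩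
  exact Nat.dvd_of_mul_dvd_mul_left two_pos
    (hζ.dvd_of_pow_eq_one _ (pow_two_mul_eq_one_of_neg_pow_eq_one hl))

end Neg

theorem isCyclotomicExtension_adjoin_simple (F : Type*) {L : Type*} [Field F] [Field L]
    [Algebra F L] {ζ : L} {n : ℕ} [NeZero n] (hζ : IsPrimitiveRoot ζ n) :
    IsCyclotomicExtension {n} F F⟮ζ⟯ := by
  change IsCyclotomicExtension {n} F F⟮ζ⟯.toSubalgebra
  rw [adjoin_simple_toSubalgebra_of_isAlgebraic
    ((hζ.isIntegral (NeZero.pos n)).tower_top.isAlgebraic)]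
  exact hζ.adjoin_isCyclotomicExtension F

theorem isCyclotomicExtension_of_neg {A B : Type*} [CommRing A] [CommRing B] [IsDomain B]
    [Algebra A B] {ζ : B} {n m : ℕ} [NeZero n] [NeZero m] [IsCyclotomicExtension {n} A B]
    (hζ : IsPrimitiveRoot ζ n) (hζ' : IsPrimitiveRoot (-ζ) m) :
    IsCyclotomicExtension {m} A B := by
  refine (IsCyclotomicExtension.iff_singleton m A B).2 ⟨⟨-ζ, hζ'⟩, fun x => ?_⟩
  have hζmem : ζ ∈ Algebra.adjoin A {b : B | b ^ m = 1} := by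
    have := neg_mem (Algebra.subset_adjoin (R := A) (s := {b : B | b ^ m = 1}) hζ'.pow_eq_one)
    rwa [neg_neg] at this
  have hle : Algebra.adjoin A {ζ} ≤ Algebra.adjoin A {b : B | b ^ m = 1} :=
    Algebra.adjoin_le (Set.singleton_subset_iff.2 hζmem)
  apply hle
  rw [IsCyclotomicExtension.adjoin_primitive_root_eq_top hζ]
  exact Algebra.mem_top

section Norm

variable {K : Type*} [Field K] [Algebra ℚ K] {ζ : K}

theorem abs_norm_sub_inv {n m : ℕ} [IsCyclotomicExtension {n} ℚ K] (hζ : IsPrimitiveRoot ζ n)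
    (hn : 2 < n) (hζ' : IsPrimitiveRoot (-ζ) m) (hm : 2 < m) :
    |Algebra.norm ℚ (ζ - ζ⁻¹)| =
      ((eval 1 (cyclotomic n ℤ) * eval 1 (cyclotomic m ℤ) : ℤ) : ℚ) := by
  have : NeZero n := ⟨by omega⟩
  have : NeZero m := ⟨by omega⟩
  have := hζ.isCyclotomicExtension_of_neg (A := ℚ) hζ'
  have hζ0 : ζ ≠ 0 := hζ.ne_zero (by omega)
  have hunit : |Algebra.norm ℚ (-ζ⁻¹)| = 1 :=
    Algebra.abs_norm_eq_one_of_pow_eq_one (n := 2 * n) (by omega)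
      (by rw [(even_two_mul n).neg_pow, inv_pow, pow_mul', hζ.pow_eq_one, one_pow, inv_one])
  have hfactor : ζ - ζ⁻¹ = -ζ⁻¹ * ((ζ - 1) * (-ζ - 1)) := by
    field_simp
    ring
  rw [hfactor, map_mul, map_mul, abs_mul, hunit, one_mul,
    hζ.sub_one_norm_eq_eval_cyclotomic hn (cyclotomic.irreducible_rat (by omega)),
    hζ'.sub_one_norm_eq_eval_cyclotomic hm (cyclotomic.irreducible_rat (by omega)),
    ← Int.cast_mul, ← Int.cast_abs,
    abs_of_nonneg (mul_nonneg (cyclotomic_nonneg _ le_rfl) (cyclotomic_nonneg _ le_rfl))]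

theorem abs_norm_sub_inv_of_odd {n : ℕ} [IsCyclotomicExtension {n} ℚ K]
    (hζ : IsPrimitiveRoot ζ n) (hn : Odd n) (hn1 : n ≠ 1) :
    |Algebra.norm ℚ (ζ - ζ⁻¹)| = eval 1 (cyclotomic n ℤ) := by
  have hn2 : 2 < n := by obtain ⟨k, rfl⟩ := hn; omega
  have := algebraRat.charZero K
  rw [hζ.abs_norm_sub_inv hn2 (hζ.neg_of_odd hn (by rw [ringChar.eq_zero]; norm_num)) (by omega),
    eval_one_cyclotomic_of_not_isPrimePow (by omega) (Nat.not_isPrimePow_two_mul hn hn1),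
    mul_one]

theorem abs_norm_sub_inv_of_four_dvd {n : ℕ} [IsCyclotomicExtension {n} ℚ K] [NeZero n]
    (hζ : IsPrimitiveRoot ζ n) (hn : 4 ∣ n) :
    |Algebra.norm ℚ (ζ - ζ⁻¹)| = eval 1 (cyclotomic n ℤ) ^ 2 := by
  have hn2 : 2 < n := by have := Nat.le_of_dvd (NeZero.pos n) hn; omega
  rw [hζ.abs_norm_sub_inv hn2 (hζ.neg_of_four_dvd hn) hn2, sq, Int.cast_mul]

theorem abs_norm_sub_inv_of_two_mul_odd {m : ℕ} [IsCyclotomicExtension {2 * m} ℚ K]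
    (hζ : IsPrimitiveRoot ζ (2 * m)) (hm : Odd m) (hm1 : m ≠ 1) :
    |Algebra.norm ℚ (ζ - ζ⁻¹)| = eval 1 (cyclotomic m ℤ) := by
  have hm2 : 2 < m := by obtain ⟨k, rfl⟩ := hm; omega
  rw [hζ.abs_norm_sub_inv (by omega) (hζ.neg_of_two_mul_odd hm) hm2,
    eval_one_cyclotomic_of_not_isPrimePow (by omega) (Nat.not_isPrimePow_two_mul hm hm1),
    one_mul]

theorem abs_norm_sub_inv_eq_one {n : ℕ} [IsCyclotomicExtension {n} ℚ K]
    (hζ : IsPrimitiveRoot ζ n) (hn : 2 < n) (hpp : ¬IsPrimePow n)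
    (hpp2 : ∀ m, Odd m → n = 2 * m → ¬IsPrimePow m) :
    |Algebra.norm ℚ (ζ - ζ⁻¹)| = 1 := by
  obtain ⟨m, rfl | rfl⟩ := Nat.even_or_odd' n
  · rcases Nat.even_or_odd m with hm | hm
    · have : NeZero (2 * m) := ⟨by omega⟩
      rw [hζ.abs_norm_sub_inv_of_four_dvd (mul_dvd_mul_left 2 (even_iff_two_dvd.1 hm)),
        eval_one_cyclotomic_of_not_isPrimePow (by omega) hpp]
      norm_num
    · rw [hζ.abs_norm_sub_inv_of_two_mul_odd hm (by omega),
        eval_one_cyclotomic_of_not_isPrimePow (by omega) (hpp2 m hm rfl)]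
      norm_num
  · rw [hζ.abs_norm_sub_inv_of_odd (odd_two_mul_add_one m) (by omega),
      eval_one_cyclotomic_of_not_isPrimePow (by omega) hpp]
    norm_num

end Norm

end IsPrimitiveRoot

/-- For `N ≥ 3` and `ζ` a primitive `N`-th root of unity in `ℂ`, the absolute value of the
norm `N_{ℚ(ζ)/ℚ}(ζ − ζ⁻¹)` equals `p` if `N = p^k` or `N = 2p^k` for an odd prime `p` and
`k ≥ 1`, equals `4` if `N = 2^k` with `k ≥ 2`, and equals `1` otherwise. -/
theorem stmt_11 (N : ℕ) (hN : 3 ≤ N) (ζ : ℂ) (hζ : IsPrimitiveRoot ζ N) :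
    (∀ p k : ℕ, p.Prime → Odd p → 1 ≤ k → (N = p ^ k ∨ N = 2 * p ^ k) →
      |Algebra.norm ℚ (IntermediateField.AdjoinSimple.gen ℚ ζ -
        (IntermediateField.AdjoinSimple.gen ℚ ζ)⁻¹)| = (p : ℚ)) ∧
    (∀ k : ℕ, 2 ≤ k → N = 2 ^ k →
      |Algebra.norm ℚ (IntermediateField.AdjoinSimple.gen ℚ ζ -
        (IntermediateField.AdjoinSimple.gen ℚ ζ)⁻¹)| = 4) ∧
    ((¬ ∃ p k : ℕ, p.Prime ∧ Odd p ∧ 1 ≤ k ∧ (N = p ^ k ∨ N = 2 * p ^ k)) →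
      (¬ ∃ k : ℕ, 2 ≤ k ∧ N = 2 ^ k) →
      |Algebra.norm ℚ (IntermediateField.AdjoinSimple.gen ℚ ζ -
        (IntermediateField.AdjoinSimple.gen ℚ ζ)⁻¹)| = 1) := by
  have : NeZero N := ⟨by omega⟩
  have : IsCyclotomicExtension {N} ℚ ℚ⟮ζ⟯ := hζ.isCyclotomicExtension_adjoin_simple ℚ
  have hζK : IsPrimitiveRoot (AdjoinSimple.gen ℚ ζ) N :=
    IsPrimitiveRoot.coe_submonoidClass_iff.1 hζ
  refine ⟨?_, ?_, ?_⟩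
  · rintro p k hp hodd hk hN'
    obtain ⟨k, rfl⟩ := Nat.exists_eq_add_of_le' hk
    have := Fact.mk hp
    have hpk1 : p ^ (k + 1) ≠ 1 := (Nat.one_lt_pow k.succ_ne_zero hp.one_lt).ne'
    rcases hN' with rfl | rfl
    · rw [hζK.abs_norm_sub_inv_of_odd hodd.pow hpk1, eval_one_cyclotomic_prime_pow,
        Int.cast_natCast]
    · rw [hζK.abs_norm_sub_inv_of_two_mul_odd hodd.pow hpk1, eval_one_cyclotomic_prime_pow,
        Int.cast_natCast]
  · rintro k hk rfl
    have h4 : 4 ∣ 2 ^ k := pow_dvd_pow 2 hk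
    obtain ⟨k, rfl⟩ : ∃ j, k = j + 1 := ⟨k - 1, by omega⟩
    have := Fact.mk Nat.prime_two
    rw [hζK.abs_norm_sub_inv_of_four_dvd h4, eval_one_cyclotomic_prime_pow]
    norm_num
  · intro h1 h2
    refine hζK.abs_norm_sub_inv_eq_one (by omega) ?_ ?_
    · intro hpp
      obtain ⟨p, k, hp, hk, rfl⟩ := (isPrimePow_nat_iff N).1 hpp
      rcases hp.eq_two_or_odd' with rfl | hodd
      · exact h2 ⟨k, (Nat.pow_lt_pow_iff_right one_lt_two).1 (by omega : 2 ^ 1 < 2 ^ k), rfl⟩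
      · exact h1 ⟨p, k, hp, hodd, hk, Or.inl rfl⟩
    · rintro m hm rfl hpp
      obtain ⟨p, k, hp, hk, rfl⟩ := (isPrimePow_nat_iff m).1 hpp
      exact h1 ⟨p, k, hp, hm.of_dvd_nat (dvd_pow_self p hk.ne'), hk, Or.inr rfl⟩
end

section
/- For every integer n ≥ 1, the identity x · w_n(x²) = v_{2n−1}(x) holds in ℤ[x]. -/
/-! Composing `w` with `x²` and multiplying by `x` turns the recurrence of `w` into the recurrence
`v_{k+4} = (x² − 2) v_{k+2} − v_k` satisfied by every other Vieta–Lucas polynomial, and the initial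
values match: `x · w₁(x²) = x = v₁` and `x · w₂(x²) = x³ − 3x = v₃`. -/

open Polynomial

/-- The recurrence sequence `w₀ = 1`, `w₁ = 1`, `wₙ = (x−2)·wₙ₋₁ − wₙ₋₂`. -/
noncomputable def w : ℕ → Polynomial ℤ
  | 0 => 1
  | 1 => 1
  | n + 2 => (X - C 2) * w (n + 1) - w n

/-- The Vieta–Lucas polynomials: `v₀ = 2`, `v₁ = x`, `vₙ = x·vₙ₋₁ − vₙ₋₂`. -/
noncomputable def v : ℕ → Polynomial ℤ
  | 0 => C 2
  | 1 => X
  | n + 2 => X * v (n + 1) - v n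

theorem v_add_four (k : ℕ) : v (k + 4) = (X ^ 2 - C 2) * v (k + 2) - v k := by
  have h₃ : v (k + 3) = X * v (k + 2) - v (k + 1) := rfl
  have h₂ : v (k + 2) = X * v (k + 1) - v k := rfl
  rw [v, h₃, C_ofNat]
  linear_combination h₂

theorem X_mul_w_succ_comp_X_sq (n : ℕ) : X * (w (n + 1)).comp (X ^ 2) = v (2 * n + 1) := by
  induction n using Nat.twoStepInduction with
  | zero => simp [w, v]
  | one =>
    simp only [w, v, mul_one, sub_comp, one_comp, X_comp, C_comp]
    ring
  | more k ih₀ ih₁ =>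
    rw [w, sub_comp, mul_comp, sub_comp, X_comp, C_comp,
      show 2 * (k + 2) + 1 = 2 * k + 1 + 4 by ring, v_add_four, ← ih₀, show 2 * k + 1 + 2 = 2 * (k + 1) + 1 by ring, ← ih₁]
    ring

/-- For every `n ≥ 1`, the identity `x·wₙ(x²) = v_{2n−1}(x)` holds in `ℤ[x]`. -/
theorem stmt_12 (n : ℕ) (hn : 1 ≤ n) :
    X * (w n).comp (X ^ 2) = v (2 * n - 1) := by
  obtain ⟨m, rfl⟩ := Nat.exists_eq_add_of_le' hn
  rw [X_mul_w_succ_comp_X_sq, show 2 * (m + 1) - 1 = 2 * m + 1 by omega]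
end

section
/- Let n ≥ 2 and set ζ = e^{iπ/(2(2n−1))} ∈ ℂ. Then the set of complex roots of w_n(x) is exactly {ζ^{2(2j−1)} + ζ^{−2(2j−1)} + 2 : j = 1, 2, …, n−1}, and these n−1 complex numbers are pairwise distinct. -/
/-!
Substituting `x = t + t⁻¹ + 2` turns the recurrence into `(t + 1) tⁿ wₙ(x) = t²ⁿ + t`, so
every `t ≠ 0, -1` with `t^(2n-1) = -1` gives a root `t + t⁻¹ + 2` of `wₙ`. The choices
`t = e^{i(2j-1)π/(2n-1)}`, `1 ≤ j ≤ n - 1`, give the roots `2 cos((2j-1)π/(2n-1)) + 2`, which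
are distinct because `cos` is injective on `[0, π]`; as `wₙ` is monic of degree `n - 1`, there
are no others.
-/

open Polynomial

theorem add_one_mul_pow_mul_aeval_w {R : Type*} [CommRing R] {t z : R}
    (h : t * z = t ^ 2 + 2 * t + 1) (n : ℕ) :
    (t + 1) * t ^ n * aeval z (w n) = t ^ (2 * n) + t := by
  induction n using Nat.twoStepInduction with
  | zero => simp [w]; ring
  | one => simp [w]; ring
  | more n ih₁ ih₂ =>
    simp only [w, map_sub, map_mul, aeval_X, map_ofNat]
    linear_combination
      (t ^ 2 + 1) * ih₂ - t ^ 2 * ih₁ + (t + 1) * t ^ (n + 1) * aeval z (w (n + 1)) * h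

theorem aeval_w_add_inv_add_two_eq_zero {K : Type*} [Field K] {t : K} (n : ℕ)
    (ht₀ : t ≠ 0) (ht₁ : t + 1 ≠ 0) (ht : t ^ (2 * n) = -t) :
    aeval (t + t⁻¹ + 2) (w n) = 0 := by
  have key := add_one_mul_pow_mul_aeval_w (z := t + t⁻¹ + 2) (by field_simp; ring) n
  rw [ht, neg_add_cancel] at key
  simpa [ht₀, ht₁] using key

theorem w_monic_and_natDegree (n : ℕ) : (w n).Monic ∧ (w n).natDegree = n - 1 := by
  induction n using Nat.twoStepInduction with
  | zero => exact ⟨monic_one, natDegree_one⟩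
  | one => exact ⟨monic_one, natDegree_one⟩
  | more n ih₁ ih₂ =>
    obtain ⟨hm, hd⟩ := ih₂
    have hpm : ((X - C 2) * w (n + 1)).Monic := (monic_X_sub_C 2).mul hm
    have hpd : ((X - C 2) * w (n + 1)).natDegree = n + 1 := by
      rw [(monic_X_sub_C 2).natDegree_mul hm, natDegree_X_sub_C, hd]; omega
    have hlt : (w n).natDegree < ((X - C 2) * w (n + 1)).natDegree := by
      rw [hpd, ih₁.2]; omega
    change ((X - C 2) * w (n + 1) - w n).Monic ∧
      ((X - C 2) * w (n + 1) - w n).natDegree = n + 2 - 1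
    exact ⟨hpm.sub_of_left (degree_lt_degree hlt),
      by rw [natDegree_sub_eq_left_of_natDegree_lt hlt, hpd]; rfl⟩

theorem Polynomial.isRoot_iff_exists_of_injOn {K ι : Type*} [CommRing K] [IsDomain K]
    {p : K[X]} (hp : p ≠ 0) {s : Finset ι} {f : ι → K} (hf : Set.InjOn f s)
    (hroot : ∀ i ∈ s, p.IsRoot (f i)) (hdeg : p.natDegree ≤ s.card) (z : K) :
    p.IsRoot z ↔ ∃ i ∈ s, f i = z := by
  classical
  have hsub : s.image f ⊆ p.roots.toFinset := by
    simpa [Finset.image_subset_iff, mem_roots hp] using hroot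
  have hcard : p.roots.toFinset.card ≤ (s.image f).card := calc
    p.roots.toFinset.card ≤ Multiset.card p.roots := Multiset.toFinset_card_le _
    _ ≤ p.natDegree := p.card_roots'
    _ ≤ (s.image f).card := by rwa [Finset.card_image_of_injOn hf]
  rw [← Finset.mem_image, Finset.eq_of_subset_of_card_le hsub hcard]
  simp [mem_roots hp]

theorem Complex.exp_pi_mul_I_div_pow (m k : ℕ) :
    exp (Real.pi * I / (2 * m)) ^ (2 * k) = exp ((k * Real.pi / m : ℝ) * I) := by
  rw [← exp_nat_mul]
  push_cast
  ring_nf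

theorem Complex.exp_nat_mul_pi_div_mul_I_pow_self {m k : ℕ} (hm : m ≠ 0) (hk : Odd k) :
    exp ((k * Real.pi / m : ℝ) * I) ^ m = -1 := by
  rw [← exp_nat_mul, show (m : ℂ) * ((k * Real.pi / m : ℝ) * I) = k * (Real.pi * I) by
    push_cast; field_simp, exp_nat_mul, exp_pi_mul_I, hk.neg_one_pow]

theorem Complex.exp_mul_I_add_inv (θ : ℂ) : exp (θ * I) + (exp (θ * I))⁻¹ = 2 * cos θ := by
  rw [two_cos, ← exp_neg, neg_mul]

open Real in
theorem Real.nat_mul_pi_div_mem_Ioo {k m : ℕ} (hk : 0 < k) (hkm : k < m) :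
    (k * π / m : ℝ) ∈ Set.Ioo 0 π := by
  have hm : (0 : ℝ) < m := by exact_mod_cast hk.trans hkm
  refine ⟨by positivity, ?_⟩
  rw [div_lt_iff₀ hm, mul_comm π]
  gcongr

theorem Complex.exp_ofReal_mul_I_ne_neg_one {θ : ℝ} (hθ : θ ∈ Set.Ioo 0 Real.pi) :
    exp (θ * I) ≠ -1 := by
  intro h
  have := exp_ofReal_mul_I_im θ
  rw [h] at this
  simp only [neg_im, one_im, neg_zero] at this
  exact (Real.sin_pos_of_pos_of_lt_pi hθ.1 hθ.2).ne this

open Real in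
theorem Real.injOn_cos_nat_mul_pi_div {m : ℕ} (hm : m ≠ 0) :
    Set.InjOn (fun k : ℕ => cos (k * π / m)) (Set.Iic m) := by
  have hm' : (0 : ℝ) < m := by positivity
  have mem : ∀ k ∈ Set.Iic m, (k * π / m : ℝ) ∈ Set.Icc 0 π := fun k hk => by
    refine ⟨by positivity, ?_⟩
    rw [div_le_iff₀ hm', mul_comm π]
    gcongr
    exact_mod_cast hk
  intro k₁ hk₁ k₂ hk₂ h
  have := injOn_cos (mem k₁ hk₁) (mem k₂ hk₂) h
  field_simp at this
  exact_mod_cast this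

section Zeta

variable {n : ℕ} {ζ : ℂ}

theorem zeta_pow_add_inv_add_two_eq_cos
    (hζ : ζ = Complex.exp (Real.pi * Complex.I / (2 * ((2 * n - 1 : ℕ) : ℂ)))) (j : ℕ) :
    ζ ^ (2 * (2 * j - 1)) + (ζ ^ (2 * (2 * j - 1)))⁻¹ + 2 =
      ((2 * Real.cos ((2 * j - 1 : ℕ) * Real.pi / (2 * n - 1 : ℕ)) + 2 : ℝ) : ℂ) := by
  rw [hζ, Complex.exp_pi_mul_I_div_pow, Complex.exp_mul_I_add_inv]
  push_cast
  rfl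

theorem aeval_w_zeta_pow_add_inv_add_two
    (hζ : ζ = Complex.exp (Real.pi * Complex.I / (2 * ((2 * n - 1 : ℕ) : ℂ)))) {j : ℕ}
    (hj₁ : 1 ≤ j) (hjn : j ≤ n - 1) :
    aeval (ζ ^ (2 * (2 * j - 1)) + (ζ ^ (2 * (2 * j - 1)))⁻¹ + 2) (w n) = 0 := by
  have hθ := Real.nat_mul_pi_div_mem_Ioo (k := 2 * j - 1) (m := 2 * n - 1) (by omega) (by omega)
  have hζpow := hζ ▸ Complex.exp_pi_mul_I_div_pow (2 * n - 1) (2 * j - 1)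
  refine aeval_w_add_inv_add_two_eq_zero n (pow_ne_zero _ (by simp [hζ])) ?_ ?_
  · rw [hζpow]
    exact fun h => Complex.exp_ofReal_mul_I_ne_neg_one hθ (eq_neg_of_add_eq_zero_left h)
  · rw [hζpow, ← pow_sub_one_mul (by omega),
      Complex.exp_nat_mul_pi_div_mul_I_pow_self (by omega) ⟨j - 1, by omega⟩, neg_one_mul]

theorem injOn_zeta_pow_add_inv_add_two
    (hζ : ζ = Complex.exp (Real.pi * Complex.I / (2 * ((2 * n - 1 : ℕ) : ℂ)))) :
    Set.InjOn (fun j : ℕ => ζ ^ (2 * (2 * j - 1)) + (ζ ^ (2 * (2 * j - 1)))⁻¹ + 2)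
      (Finset.Icc 1 (n - 1)) := by
  intro j₁ hj₁ j₂ hj₂ h
  simp only [Finset.coe_Icc, Set.mem_Icc] at hj₁ hj₂
  dsimp only at h
  rw [zeta_pow_add_inv_add_two_eq_cos hζ, zeta_pow_add_inv_add_two_eq_cos hζ, Complex.ofReal_inj,
    add_left_inj, mul_right_inj' two_ne_zero] at h
  have := Real.injOn_cos_nat_mul_pi_div (m := 2 * n - 1) (by omega)
    (by simp; omega : 2 * j₁ - 1 ∈ Set.Iic _) (by simp; omega : 2 * j₂ - 1 ∈ Set.Iic _) h
  omega

end Zeta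

theorem stmt_13_general (n : ℕ) (ζ : ℂ)
    (hζ : ζ = Complex.exp (Real.pi * Complex.I / (2 * ((2 * n - 1 : ℕ) : ℂ)))) :
    (∀ z : ℂ, (Polynomial.aeval z) (w n) = 0 ↔
      ∃ j : ℕ, 1 ≤ j ∧ j ≤ n - 1 ∧
        z = ζ ^ (2 * (2 * j - 1)) + (ζ ^ (2 * (2 * j - 1)))⁻¹ + 2) ∧
    (∀ j₁ j₂ : ℕ, 1 ≤ j₁ → j₁ ≤ n - 1 → 1 ≤ j₂ → j₂ ≤ n - 1 →
      ζ ^ (2 * (2 * j₁ - 1)) + (ζ ^ (2 * (2 * j₁ - 1)))⁻¹ + 2 =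
        ζ ^ (2 * (2 * j₂ - 1)) + (ζ ^ (2 * (2 * j₂ - 1)))⁻¹ + 2 → j₁ = j₂) := by
  have hinj := injOn_zeta_pow_add_inv_add_two hζ
  obtain ⟨hmonic, hdeg⟩ := w_monic_and_natDegree n
  have hroots := isRoot_iff_exists_of_injOn (hmonic.map (algebraMap ℤ ℂ)).ne_zero hinj
    (fun j hj => by
      rw [Finset.mem_Icc] at hj
      exact (eval_map_algebraMap _ _).trans (aeval_w_zeta_pow_add_inv_add_two hζ hj.1 hj.2))
    (by simp [hmonic.natDegree_map, hdeg])
  refine ⟨fun z => ?_, fun j₁ j₂ h₁ h₁' h₂ h₂' => hinj (by simp [*]) (by simp [*])⟩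
  rw [← eval_map_algebraMap, ← IsRoot.def, hroots]
  simp [eq_comm, and_assoc]

/-- For `n ≥ 2` and `ζ = e^{iπ/(2(2n−1))}`, the set of complex roots of `wₙ(x)` is exactly
`{ζ^(2(2j−1)) + ζ^(−2(2j−1)) + 2 : j = 1, …, n−1}`, and these `n−1` numbers are pairwise
distinct. -/
theorem stmt_13 (n : ℕ) (hn : 2 ≤ n) (ζ : ℂ)
    (hζ : ζ = Complex.exp (Real.pi * Complex.I / (2 * ((2 * n - 1 : ℕ) : ℂ)))) :
    (∀ z : ℂ, (Polynomial.aeval z) (w n) = 0 ↔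
      ∃ j : ℕ, 1 ≤ j ∧ j ≤ n - 1 ∧
        z = ζ ^ (2 * (2 * j - 1)) + (ζ ^ (2 * (2 * j - 1)))⁻¹ + 2) ∧
    (∀ j₁ j₂ : ℕ, 1 ≤ j₁ → j₁ ≤ n - 1 → 1 ≤ j₂ → j₂ ≤ n - 1 →
      ζ ^ (2 * (2 * j₁ - 1)) + (ζ ^ (2 * (2 * j₁ - 1)))⁻¹ + 2 =
        ζ ^ (2 * (2 * j₂ - 1)) + (ζ ^ (2 * (2 * j₂ - 1)))⁻¹ + 2 → j₁ = j₂) :=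
  stmt_13_general n ζ hζ
end

section
/- Let n ≥ 2 and set ζ = e^{iπ/(2(2n−1))} ∈ ℂ. Then the set of complex roots of the polynomial w_n(x²) is exactly {ζ^{2j−1} + ζ^{−(2j−1)} : j ∈ {1, …, 2n−1}, j ≠ n}, and these 2n−2 complex numbers are pairwise distinct. -/
open Polynomial

/-!
Substituting `x = (t + t⁻¹)²`, so that `x - 2 = t² + t⁻²`, turns the recurrence into a
Chebyshev-type one with closed form `t²ⁿ (t² + 1) wₙ(x) = t⁴ⁿ + t²`. Hence for `z = t + t⁻¹ ≠ 0`
(every `z` has this form over `ℂ`), `wₙ(z²) = 0` iff `t^(2m) = -1` with `m = 2n - 1`, i.e. iff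
`t = ζ^a` for an odd `a < 4m`, where `ζ` is a primitive `4m`-th root of unity; replacing `t` by
`t⁻¹` brings `a` into `[1, 2m - 1]`. The exponent `a = m` gives `z = 0`, which is not a root since
`wₙ(0) = (-1)ⁿ⁺¹ (2n - 1)`. Distinctness: `ζ^a + ζ^(-a) = ζ^b + ζ^(-b)` forces `ζ^a = ζ^b` or
`ζ^(a+b) = 1`.
-/

lemma aeval_zero_w {R : Type*} [CommRing R] (n : ℕ) :
    aeval (0 : R) (w n) = (-1) ^ (n + 1) * (2 * n - 1) := by
  induction n using Nat.twoStepInduction with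
  | zero => simp [w]
  | one => simp [w]; ring
  | more n ih₁ ih₂ =>
    simp only [w, map_sub, map_mul, aeval_X, map_ofNat, ih₁, ih₂]
    push_cast
    ring

section Field

variable {K : Type*} [Field K]

lemma pow_mul_aeval_w_add_inv_sq {t : K} (ht : t ≠ 0) (n : ℕ) :
    t ^ (2 * n) * (t ^ 2 + 1) * aeval ((t + t⁻¹) ^ 2) (w n) = t ^ (4 * n) + t ^ 2 := by
  induction n using Nat.twoStepInduction with
  | zero => simp [w, add_comm]
  | one => simp [w]; field_simp
  | more n ih₁ ih₂ =>
    simp only [w, map_sub, map_mul, aeval_X, map_ofNat]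
    have hc : ((t + t⁻¹) ^ 2 - 2) * t ^ 2 = t ^ 4 + 1 := by field_simp; ring
    linear_combination (t ^ 4 + 1) * ih₂ - t ^ 4 * ih₁ +
      t ^ (2 * (n + 1)) * (t ^ 2 + 1) * aeval ((t + t⁻¹) ^ 2) (w (n + 1)) * hc

lemma aeval_w_add_inv_sq_eq_zero_iff {t : K} (ht : t + t⁻¹ ≠ 0) (n : ℕ) :
    aeval ((t + t⁻¹) ^ 2) (w n) = 0 ↔ t ^ (4 * n) = -t ^ 2 := by
  have ht₀ : t ≠ 0 := by rintro rfl; simp at ht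
  have hsq : t ^ 2 + 1 ≠ 0 := by
    rw [show t ^ 2 + 1 = t * (t + t⁻¹) by field_simp]
    exact mul_ne_zero ht₀ ht
  rw [← mul_eq_zero_iff_left (mul_ne_zero (pow_ne_zero _ ht₀) hsq), pow_mul_aeval_w_add_inv_sq ht₀,
    add_eq_zero_iff_eq_neg]

lemma exists_add_inv_eq [IsAlgClosed K] (z : K) : ∃ t : K, t + t⁻¹ = z := by
  obtain ⟨t, ht⟩ := IsAlgClosed.exists_root (C 1 * X ^ 2 + C (-z) * X + C 1)
    (by rw [degree_quadratic one_ne_zero]; decide)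
  simp only [IsRoot, eval_add, eval_mul, eval_pow, eval_X, eval_C] at ht
  have ht₀ : t ≠ 0 := by rintro rfl; simp at ht
  exact ⟨t, by field_simp; linear_combination ht⟩

lemma add_inv_eq_zero_of_sq_eq_neg_one {x : K} (h : x ^ 2 = -1) : x + x⁻¹ = 0 := by
  have hx : x ≠ 0 := by rintro rfl; simp at h
  field_simp
  linear_combination h

lemma eq_or_mul_eq_one_of_add_inv_eq {x y : K} (hx : x ≠ 0) (hy : y ≠ 0)
    (h : x + x⁻¹ = y + y⁻¹) : x = y ∨ x * y = 1 := by
  have : (x - y) * (x * y - 1) = 0 := by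
    field_simp at h
    linear_combination h
  rcases mul_eq_zero.mp this with h | h
  · exact .inl (sub_eq_zero.mp h)
  · exact .inr (sub_eq_zero.mp h)

lemma aeval_zero_w_ne_zero [CharZero K] (n : ℕ) : aeval (0 : K) (w n) ≠ 0 := by
  have h : (2 * n : K) - 1 ≠ 0 := sub_ne_zero.mpr (by exact_mod_cast (by omega : 2 * n ≠ 1))
  rw [aeval_zero_w]
  exact mul_ne_zero (pow_ne_zero _ (neg_ne_zero.mpr one_ne_zero)) h

namespace IsPrimitiveRoot

variable {ζ : K} {N : ℕ}

lemma pow_eq_neg_one (hζ : IsPrimitiveRoot ζ (2 * N)) (hN : 0 < N) : ζ ^ N = -1 := by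
  have := hζ.pow_of_dvd hN.ne' (dvd_mul_left N 2)
  rw [Nat.mul_div_cancel _ hN] at this
  exact this.eq_neg_one_of_two_right

lemma pow_eq_neg_one_iff (hζ : IsPrimitiveRoot ζ (2 * N)) (hN : 0 < N) {t : K} :
    t ^ N = -1 ↔ ∃ i < 2 * N, Odd i ∧ ζ ^ i = t := by
  have hζN := hζ.pow_eq_neg_one hN
  constructor
  · intro ht
    have : NeZero (2 * N) := ⟨by omega⟩
    obtain ⟨i, hi, rfl⟩ := hζ.eq_pow_of_pow_eq_one (ξ := t) (by rw [pow_mul', ht]; norm_num)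
    refine ⟨i, hi, ?_, rfl⟩
    rw [← pow_mul, mul_comm, pow_mul, hζN] at ht
    by_contra hev
    rw [Nat.not_odd_iff_even.mp hev |>.neg_one_pow, eq_comm, ← hζN] at ht
    exact hζ.pow_ne_one_of_pos_of_lt hN.ne' (by omega) ht
  · rintro ⟨i, -, hi, rfl⟩
    rw [← pow_mul, mul_comm, pow_mul, hζN, hi.neg_one_pow]

lemma add_inv_pow_sub {M : ℕ} (hζ : IsPrimitiveRoot ζ M) {i : ℕ} (hi : i ≤ M) :
    ζ ^ (M - i) + (ζ ^ (M - i))⁻¹ = ζ ^ i + (ζ ^ i)⁻¹ := by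
  have : ζ ^ (M - i) = (ζ ^ i)⁻¹ :=
    eq_inv_of_mul_eq_one_left (by rw [← pow_add, Nat.sub_add_cancel hi, hζ.pow_eq_one])
  rw [this, inv_inv, add_comm]

lemma add_inv_pow_injOn (hζ : IsPrimitiveRoot ζ (2 * N)) :
    Set.InjOn (fun a ↦ ζ ^ a + (ζ ^ a)⁻¹) (Set.Iic N) := by
  intro a ha b hb h
  simp only [Set.mem_Iic] at ha hb
  rcases Nat.eq_zero_or_pos N with rfl | hN
  · omega
  have hζ₀ : ζ ≠ 0 := hζ.ne_zero (by omega)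
  rcases eq_or_mul_eq_one_of_add_inv_eq (pow_ne_zero a hζ₀) (pow_ne_zero b hζ₀) h with h | h
  · exact hζ.pow_inj (by omega) (by omega) h
  · rw [← pow_add, hζ.pow_eq_one_iff_dvd] at h
    obtain ⟨k, hk⟩ := h
    rcases k with _ | _ | k <;> grind

end IsPrimitiveRoot

theorem aeval_w_sq_eq_zero_iff [IsAlgClosed K] [CharZero K] {n m : ℕ} (hm : 2 * n = m + 1)
    {ζ : K} (hζ : IsPrimitiveRoot ζ (4 * m)) (z : K) :
    aeval (z ^ 2) (w n) = 0 ↔ ∃ a ≤ 2 * m, Odd a ∧ a ≠ m ∧ z = ζ ^ a + (ζ ^ a)⁻¹ := by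
  replace hζ : IsPrimitiveRoot ζ (2 * (2 * m)) := by rwa [← mul_assoc]
  have hzm : ζ ^ m + (ζ ^ m)⁻¹ = 0 :=
    add_inv_eq_zero_of_sq_eq_neg_one (by rw [← pow_mul, mul_comm, hζ.pow_eq_neg_one (by omega)])
  have hroot (t : K) (ht : t + t⁻¹ ≠ 0) :
      aeval ((t + t⁻¹) ^ 2) (w n) = 0 ↔ ∃ i < 2 * (2 * m), Odd i ∧ ζ ^ i = t := by
    have ht₀ : t ≠ 0 := by rintro rfl; simp at ht
    rw [aeval_w_add_inv_sq_eq_zero_iff ht, show 4 * n = 2 * m + 2 by omega, pow_add,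
      neg_eq_neg_one_mul, mul_left_inj' (pow_ne_zero 2 ht₀), hζ.pow_eq_neg_one_iff (by omega)]
  constructor
  · intro h
    have hz : z ≠ 0 := by
      rintro rfl
      exact aeval_zero_w_ne_zero n (by simpa using h)
    obtain ⟨t, rfl⟩ := exists_add_inv_eq z
    obtain ⟨i, hi, hodd, rfl⟩ := (hroot t hz).mp h
    obtain ⟨a, ha, ha_odd, heq⟩ :
        ∃ a ≤ 2 * m, Odd a ∧ ζ ^ i + (ζ ^ i)⁻¹ = ζ ^ a + (ζ ^ a)⁻¹ := by
      rcases le_or_gt i (2 * m) with hi' | hi'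
      · exact ⟨i, hi', hodd, rfl⟩
      · exact ⟨2 * (2 * m) - i, by omega, Nat.Even.sub_odd hi.le (even_two_mul _) hodd,
          (hζ.add_inv_pow_sub hi.le).symm⟩
    refine ⟨a, ha, ha_odd, ?_, heq⟩
    rintro rfl
    exact hz (heq.trans hzm)
  · rintro ⟨a, ha, hodd, ham, rfl⟩
    have hz : ζ ^ a + (ζ ^ a)⁻¹ ≠ 0 := fun h ↦
      ham (hζ.add_inv_pow_injOn ha (Set.mem_Iic.mpr (by omega)) (h.trans hzm.symm))
    exact (hroot _ hz).mpr ⟨a, by omega, hodd, rfl⟩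

end Field

/-- For `n ≥ 2` and `ζ = e^{iπ/(2(2n−1))}`, the set of complex roots of `wₙ(x²)` is exactly
`{ζ^(2j−1) + ζ^(−(2j−1)) : j ∈ {1, …, 2n−1}, j ≠ n}`, and these `2n−2` numbers are
pairwise distinct. -/
theorem stmt_14 (n : ℕ) (hn : 2 ≤ n) (ζ : ℂ)
    (hζ : ζ = Complex.exp (Real.pi * Complex.I / (2 * ((2 * n - 1 : ℕ) : ℂ)))) :
    (∀ z : ℂ, (Polynomial.aeval z) ((w n).comp (X ^ 2)) = 0 ↔
      ∃ j : ℕ, 1 ≤ j ∧ j ≤ 2 * n - 1 ∧ j ≠ n ∧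
        z = ζ ^ (2 * j - 1) + (ζ ^ (2 * j - 1))⁻¹) ∧
    (∀ j₁ j₂ : ℕ, 1 ≤ j₁ → j₁ ≤ 2 * n - 1 → j₁ ≠ n → 1 ≤ j₂ → j₂ ≤ 2 * n - 1 → j₂ ≠ n →
      ζ ^ (2 * j₁ - 1) + (ζ ^ (2 * j₁ - 1))⁻¹ = ζ ^ (2 * j₂ - 1) + (ζ ^ (2 * j₂ - 1))⁻¹ →
      j₁ = j₂) := by
  set m := 2 * n - 1 with hm_def
  have hm : 2 * n = m + 1 := by omega
  have hprim : IsPrimitiveRoot ζ (4 * m) := by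
    convert Complex.isPrimitiveRoot_exp (4 * m) (by omega) using 1
    rw [hζ]
    congr 1
    push_cast
    field_simp
    ring
  refine ⟨fun z ↦ ?_, fun j₁ j₂ _ _ _ _ _ _ h ↦ ?_⟩
  · rw [aeval_comp, aeval_X_pow, aeval_w_sq_eq_zero_iff hm hprim]
    constructor
    · rintro ⟨a, ha, ⟨k, rfl⟩, hak, rfl⟩
      refine ⟨k + 1, by omega, by omega, by omega, ?_⟩
      rw [show 2 * (k + 1) - 1 = 2 * k + 1 by omega]
    · rintro ⟨j, _, _, _, rfl⟩
      exact ⟨2 * j - 1, by omega, ⟨j - 1, by omega⟩, by omega, rfl⟩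
  · have hinj := (show IsPrimitiveRoot ζ (2 * (2 * m)) by rwa [← mul_assoc]).add_inv_pow_injOn
    have := hinj (Set.mem_Iic.mpr (by omega)) (Set.mem_Iic.mpr (by omega)) h
    omega
end

section
/- Let n ≥ 2 be an integer such that 2n−1 is prime. Then both w_n(x) and w_n(x²) are irreducible over ℚ. -/
open Polynomial

/-!
For a polynomial `f` of degree `d` over a field, `x ^ d * f (x + x⁻¹ + c)` is again a polynomial,
of degree `2 d` when `f` is monic, and this transform is multiplicative on monic polynomials; so if
the transform of a monic `f` is irreducible, so is `f`. Since `wₙ(t + t⁻¹ + 2)` satisfies the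
recurrence of `(t ^ (2n-1) + 1) / ((t + 1) t ^ (n-1))`, the transform of `wₙ` with `c = 2` is
`(x ^ p + 1) / (x + 1) = Φ₂ₚ` for `p = 2n - 1`, and the transform of `wₙ(x²)` with `c = 0` is
`Φ₂ₚ(x²) = Φ₄ₚ`. Cyclotomic polynomials are irreducible over `ℚ`.
-/

lemma w_add_two (n : ℕ) : w (n + 2) = (X - C 2) * w (n + 1) - w n := rfl

lemma w_two : w 2 = X - C 3 := by
  rw [w_add_two, show w 1 = 1 from rfl, show w 0 = 1 from rfl]
  simp only [mul_one, map_ofNat]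
  ring

lemma w_succ_monic_and_natDegree (n : ℕ) : (w (n + 1)).Monic ∧ (w (n + 1)).natDegree = n := by
  induction n using Nat.twoStepInduction with
  | zero => exact ⟨monic_one, natDegree_one⟩
  | one => exact w_two ▸ ⟨monic_X_sub_C 3, natDegree_X_sub_C 3⟩
  | more n ih₀ ih₁ =>
    have hlead : ((X - C 2) * w (n + 2)).Monic ∧ ((X - C 2) * w (n + 2)).natDegree = n + 2 := by
      refine ⟨(monic_X_sub_C 2).mul ih₁.1, ?_⟩
      rw [(monic_X_sub_C 2).natDegree_mul ih₁.1, natDegree_X_sub_C, ih₁.2, add_comm]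
    have hlt : (w (n + 1)).natDegree < ((X - C 2) * w (n + 2)).natDegree := by omega
    rw [w_add_two, natDegree_sub_eq_left_of_natDegree_lt hlt, hlead.2]
    exact ⟨hlead.1.sub_of_left (degree_lt_degree hlt), rfl⟩

lemma w_succ_eval₂_add_inv_add_two {F : Type*} [Field F] {t : F} (ht : t ≠ 0) (n : ℕ) :
    (t + 1) * t ^ n * eval₂ (Int.castRingHom F) (t + t⁻¹ + 2) (w (n + 1)) =
      t ^ (2 * n + 1) + 1 := by
  induction n using Nat.twoStepInduction with
  | zero => simp [show w 1 = 1 from rfl]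
  | one =>
    rw [w_two, eval₂_sub, eval₂_X, eval₂_C, map_ofNat]
    field_simp
    ring
  | more n ih₀ ih₁ =>
    rw [w_add_two, eval₂_sub, eval₂_mul, eval₂_sub, eval₂_X, eval₂_C, map_ofNat]
    linear_combination (t ^ 2 + 1) * ih₁ - t ^ 2 * ih₀
      + (t + t ^ 2) * t ^ n * eval₂ (Int.castRingHom F) (t + t⁻¹ + 2) (w (n + 2)) *
        mul_inv_cancel₀ ht

namespace Polynomial

variable {K : Type*} [Field K]

/-- `x ^ deg f * f (x + x⁻¹ + c)`, expanded in powers of `x`. -/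
noncomputable def joukowskiTransform (c : K) (f : K[X]) : K[X] :=
  ∑ i ∈ Finset.range (f.natDegree + 1),
    C (f.coeff i) * X ^ (f.natDegree - i) * (X ^ 2 + C c * X + 1) ^ i

lemma aeval_joukowskiTransform {L : Type*} [Field L] [Algebra K L] {x : L} (hx : x ≠ 0)
    (c : K) (f : K[X]) :
    aeval x (joukowskiTransform c f) =
      x ^ f.natDegree * aeval (x + x⁻¹ + algebraMap K L c) f := by
  rw [aeval_eq_sum_range (p := f), Finset.mul_sum, joukowskiTransform, map_sum]
  refine Finset.sum_congr rfl fun i hi => ?_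
  have hpow : x ^ f.natDegree = x ^ (f.natDegree - i) * x ^ i := by
    rw [← pow_add, Nat.sub_add_cancel (Finset.mem_range_succ_iff.mp hi)]
  have hquad : x * (x + x⁻¹ + algebraMap K L c) = x ^ 2 + algebraMap K L c * x + 1 := by
    field_simp
    ring
  simp only [map_mul, map_pow, map_add, aeval_C, aeval_X, map_one, ← hquad, mul_pow, hpow,
    Algebra.smul_def]
  ring

lemma joukowskiTransform_one (c : K) : joukowskiTransform c 1 = 1 := by
  simp [joukowskiTransform]

lemma eq_of_aeval_ratFuncX {p q : K[X]}
    (h : aeval (RatFunc.X : RatFunc K) p = aeval RatFunc.X q) : p = q := by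
  rw [RatFunc.aeval_X_left_eq_algebraMap, RatFunc.aeval_X_left_eq_algebraMap] at h
  exact RatFunc.algebraMap_injective K h

lemma joukowskiTransform_mul (c : K) {f g : K[X]} (hf : f.Monic) (hg : g.Monic) :
    joukowskiTransform c (f * g) = joukowskiTransform c f * joukowskiTransform c g := by
  have hX : (RatFunc.X : RatFunc K) ≠ 0 := RatFunc.X_ne_zero
  apply eq_of_aeval_ratFuncX
  simp only [map_mul, aeval_joukowskiTransform hX, hf.natDegree_mul hg, pow_add]
  ring

lemma joukowskiTransform_zero_comp_X_sq (f : K[X]) :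
    joukowskiTransform 0 (f.comp (X ^ 2)) = expand K 2 (joukowskiTransform 2 f) := by
  have hX : (RatFunc.X : RatFunc K) ≠ 0 := RatFunc.X_ne_zero
  have hsq :
      (RatFunc.X + RatFunc.X⁻¹ : RatFunc K) ^ 2 = RatFunc.X ^ 2 + (RatFunc.X ^ 2)⁻¹ + 2 := by
    field_simp
    ring
  apply eq_of_aeval_ratFuncX
  rw [expand_aeval, aeval_joukowskiTransform hX, aeval_joukowskiTransform (pow_ne_zero 2 hX),
    aeval_comp, natDegree_comp, natDegree_X_pow, aeval_X_pow, map_zero, add_zero, map_ofNat, hsq,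
    mul_comm _ 2, pow_mul]

lemma natDegree_joukowskiTransform (c : K) {f : K[X]} (hf : f.Monic) :
    (joukowskiTransform c f).natDegree = 2 * f.natDegree := by
  have hq : (X ^ 2 + C c * X + 1 : K[X]).Monic := by monicity!
  have hq2 : (X ^ 2 + C c * X + 1 : K[X]).natDegree = 2 := by compute_degree!
  have hterm (i : ℕ) :
      (C (f.coeff i) * X ^ (f.natDegree - i) * (X ^ 2 + C c * X + 1) ^ i).natDegree ≤
        f.natDegree - i + 2 * i := by
    refine natDegree_mul_le.trans (add_le_add ((natDegree_C_mul_le _ _).trans ?_) ?_)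
    · rw [natDegree_X_pow]
    · rw [hq.natDegree_pow, hq2, mul_comm]
  refine natDegree_eq_of_le_of_coeff_ne_zero ?_ ?_
  · refine natDegree_sum_le_of_forall_le _ _ fun i hi => (hterm i).trans ?_
    have := Finset.mem_range_succ_iff.mp hi
    omega
  · rw [joukowskiTransform, finsetSum_coeff, Finset.sum_eq_single_of_mem _
      (Finset.self_mem_range_succ _) fun i hi hne => coeff_eq_zero_of_natDegree_lt ?_]
    · have htop : 2 * f.natDegree = ((X ^ 2 + C c * X + 1 : K[X]) ^ f.natDegree).natDegree := by
        rw [hq.natDegree_pow, hq2, mul_comm]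
      rw [hf.coeff_natDegree, Nat.sub_self, C_1, one_mul, pow_zero, one_mul, htop,
        (hq.pow _).coeff_natDegree]
      exact one_ne_zero
    · have := Finset.mem_range_succ_iff.mp hi
      exact (hterm i).trans_lt (by omega)

lemma Monic.irreducible_of_irreducible_joukowskiTransform {c : K} {f : K[X]} (hf : f.Monic)
    (hT : Irreducible (joukowskiTransform c f)) : Irreducible f := by
  refine hf.irreducible_iff_natDegree.mpr ⟨?_, fun a b ha hb hab => ?_⟩
  · rintro rfl
    exact not_irreducible_one (joukowskiTransform_one c ▸ hT)
  · rw [← hab, joukowskiTransform_mul c ha hb] at hT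
    refine (hT.isUnit_or_isUnit rfl).imp (fun hu => ?_) (fun hu => ?_)
    · simpa [natDegree_joukowskiTransform c ha] using natDegree_eq_zero_of_isUnit hu
    · simpa [natDegree_joukowskiTransform c hb] using natDegree_eq_zero_of_isUnit hu

lemma X_add_one_mul_cyclotomic_two_mul {R : Type*} [CommRing R] [IsDomain R] {p : ℕ}
    (hp : p.Prime) (hodd : Odd p) :
    (X + 1) * cyclotomic (2 * p) R = X ^ p + 1 := by
  have : Fact p.Prime := ⟨hp⟩
  have hprime : cyclotomic p R * (X - 1) = X ^ p - 1 := cyclotomic_prime_mul_X_sub_one R p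
  have hexpand : cyclotomic (2 * p) R * cyclotomic p R * (X ^ 2 - 1) = X ^ (2 * p) - 1 := by
    have h := congrArg (expand R 2) hprime
    rwa [map_mul, map_sub, map_sub, map_pow, map_one, expand_X, ← pow_mul,
      cyclotomic_expand_eq_cyclotomic_mul Nat.prime_two hodd.not_two_dvd_nat, mul_comm p] at h
  have hne : cyclotomic p R * (X - 1) ≠ 0 :=
    mul_ne_zero (cyclotomic_ne_zero p R) (X_sub_C_ne_zero 1)
  refine mul_left_cancel₀ hne ?_
  linear_combination hexpand - (X ^ p + 1) * hprime

end Polynomial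

lemma X_add_one_mul_joukowskiTransform_two_w (K : Type*) [Field K] (n : ℕ) :
    (X + 1) * joukowskiTransform 2 ((w (n + 1)).map (Int.castRingHom K)) =
      X ^ (2 * n + 1) + 1 := by
  have hX : (RatFunc.X : RatFunc K) ≠ 0 := RatFunc.X_ne_zero
  have hmap (x : RatFunc K) (p : ℤ[X]) :
      aeval x (p.map (Int.castRingHom K)) = eval₂ (Int.castRingHom _) x p := by
    rw [aeval_def, eval₂_map]
    congr
    exact Subsingleton.elim _ _
  apply eq_of_aeval_ratFuncX
  rw [map_mul, aeval_joukowskiTransform hX, (w_succ_monic_and_natDegree n).1.natDegree_map,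
    (w_succ_monic_and_natDegree n).2, hmap, map_ofNat, map_add, map_add, map_pow, aeval_X,
    map_one, ← w_succ_eval₂_add_inv_add_two hX n, mul_assoc]

theorem stmt_15_general (n : ℕ) (hp : Nat.Prime (2 * n - 1)) :
    Irreducible ((w n).map (Int.castRingHom ℚ)) ∧
    Irreducible (((w n).comp (X ^ 2)).map (Int.castRingHom ℚ)) := by
  obtain ⟨d, rfl⟩ : ∃ d, n = d + 1 := ⟨n - 1, by have := hp.two_le; omega⟩
  rw [show 2 * (d + 1) - 1 = 2 * d + 1 by omega] at hp
  set f := (w (d + 1)).map (Int.castRingHom ℚ)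
  have hf : f.Monic := (w_succ_monic_and_natDegree d).1.map _
  have hT : joukowskiTransform 2 f = cyclotomic (2 * (2 * d + 1)) ℚ :=
    mul_left_cancel₀ (X_add_C_ne_zero 1) <| (X_add_one_mul_joukowskiTransform_two_w ℚ d).trans
      (X_add_one_mul_cyclotomic_two_mul hp (odd_two_mul_add_one d)).symm
  refine ⟨hf.irreducible_of_irreducible_joukowskiTransform (c := 2) ?_, ?_⟩
  · exact hT ▸ cyclotomic.irreducible_rat (by positivity)
  rw [Polynomial.map_comp, Polynomial.map_pow, map_X]
  refine (hf.comp (monic_X_pow 2) (by simp)).irreducible_of_irreducible_joukowskiTransform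
    (c := 0) ?_
  rw [joukowskiTransform_zero_comp_X_sq, hT,
    cyclotomic_expand_eq_cyclotomic Nat.prime_two (dvd_mul_right 2 _)]
  exact cyclotomic.irreducible_rat (by positivity)

/-- If `n ≥ 2` and `2n−1` is prime, then both `wₙ(x)` and `wₙ(x²)` are irreducible
over `ℚ`. -/
theorem stmt_15 (n : ℕ) (hn : 2 ≤ n) (hp : Nat.Prime (2 * n - 1)) :
    Irreducible ((w n).map (Int.castRingHom ℚ)) ∧
    Irreducible (((w n).comp (X ^ 2)).map (Int.castRingHom ℚ)) :=
  stmt_15_general n hp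
end

section
/- Let n ≥ 2, let ρ ∈ ℂ be a primitive 2(2n−1)-th root of unity, and let Ω_{2n−1}(x) be the minimal polynomial over ℚ of ρ + ρ^{−1} + 2. Then Ω_{2n−1}(x) divides w_n(x) in ℚ[x], but Ω_{2n−1}(x) does not divide w_m(x) for any integer m with 2 ≤ m < n; that is, Ω_{2n−1}(x) is a primitive divisor of w_n(x). -/
/-!
With `α = ρ + ρ⁻¹ + 2` one has `(ρ + 1) ρᵏ wₖ(α) = ρ²ᵏ + ρ`, so for `ρ ≠ 0, -1` the number `α` is a
root of `wₖ` exactly when `ρ²ᵏ = -ρ`. If `ρ` has order `2N` with `N = 2n - 1`, then `-ρ = ρ^(N+1)`,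
and for `2k < 2N` injectivity of `j ↦ ρʲ` on `[0, 2N)` turns this into `2k = N + 1 = 2n`.
-/

open Polynomial

theorem IsPrimitiveRoot.pow_eq_neg_one_s19 {R : Type*} [CommRing R] [NoZeroDivisors R] {ζ : R}
    {N : ℕ} (hζ : IsPrimitiveRoot ζ (2 * N)) (hN : N ≠ 0) : ζ ^ N = -1 :=
  IsPrimitiveRoot.eq_neg_one_of_two_right <| by
    simpa [hN] using hζ.pow_of_dvd hN (dvd_mul_left N 2)

section

variable {K : Type*} [Field K] {ρ : K}

theorem aeval_w_mul_eq (hρ : ρ ≠ 0) :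
    ∀ k, (ρ + 1) * ρ ^ k * aeval (ρ + ρ⁻¹ + 2) (w k) = ρ ^ (2 * k) + ρ
  | 0 => by simp only [w, map_one]; ring
  | 1 => by simp only [w, map_one]; ring
  | k + 2 => by
    have h₀ := aeval_w_mul_eq hρ k
    have h₁ := aeval_w_mul_eq hρ (k + 1)
    have hinv : ρ * ρ⁻¹ = 1 := mul_inv_cancel₀ hρ
    simp only [w, map_sub, map_mul, aeval_X, map_ofNat]
    linear_combination (ρ ^ 2 + 1) * h₁ - ρ ^ 2 * h₀ +
      (ρ + 1) * ρ ^ (k + 1) * aeval (ρ + ρ⁻¹ + 2) (w (k + 1)) * hinv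

theorem aeval_w_eq_zero_iff (hρ₀ : ρ ≠ 0) (hρ₁ : ρ + 1 ≠ 0)
    (k : ℕ) : aeval (ρ + ρ⁻¹ + 2) (w k) = 0 ↔ ρ ^ (2 * k) = -ρ := by
  have h := aeval_w_mul_eq hρ₀ k
  have hc : (ρ + 1) * ρ ^ k ≠ 0 := mul_ne_zero hρ₁ (pow_ne_zero _ hρ₀)
  rw [← mul_right_inj' hc, mul_zero, h, add_eq_zero_iff_eq_neg]

theorem aeval_w_eq_zero_iff_of_isPrimitiveRoot {N : ℕ}
    (hρ : IsPrimitiveRoot ρ (2 * N)) (hN : 1 < N) {k : ℕ} (hk : k < N) :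
    aeval (ρ + ρ⁻¹ + 2) (w k) = 0 ↔ 2 * k = N + 1 := by
  have hneg : ρ ^ N = -1 := hρ.pow_eq_neg_one_s19 (by omega)
  have hρ₁ : ρ + 1 ≠ 0 := by
    intro h
    have : 1 = N := hρ.pow_inj (by omega) (by omega) (by rw [pow_one, hneg]; linear_combination h)
    omega
  rw [aeval_w_eq_zero_iff (hρ.ne_zero (by omega)) hρ₁, show -ρ = ρ ^ (N + 1) by
    rw [pow_succ, hneg, neg_one_mul]]
  exact ⟨fun h => hρ.pow_inj (by omega) (by omega) h, fun h => h ▸ rfl⟩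

theorem minpoly_dvd_map_w_iff [Algebra ℚ K] {N : ℕ} (hρ : IsPrimitiveRoot ρ (2 * N)) (hN : 1 < N)
    {k : ℕ} (hk : k < N) :
    minpoly ℚ (ρ + ρ⁻¹ + 2) ∣ (w k).map (Int.castRingHom ℚ) ↔ 2 * k = N + 1 := by
  rw [minpoly.dvd_iff, ← algebraMap_int_eq, aeval_map_algebraMap]
  exact aeval_w_eq_zero_iff_of_isPrimitiveRoot hρ hN hk

end

/-- For `n ≥ 2`, `ρ` a primitive `2(2n−1)`-th root of unity in `ℂ`, and `Ω_{2n−1}` the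
minimal polynomial over `ℚ` of `ρ + ρ⁻¹ + 2`: `Ω_{2n−1}` divides `wₙ(x)` in `ℚ[x]`, but
`Ω_{2n−1}` does not divide `w_m(x)` for any `2 ≤ m < n`; i.e. `Ω_{2n−1}` is a primitive
divisor of `wₙ(x)`. -/
theorem stmt_19 (n : ℕ) (hn : 2 ≤ n) (ρ : ℂ)
    (hρ : IsPrimitiveRoot ρ (2 * (2 * n - 1))) :
    minpoly ℚ (ρ + ρ⁻¹ + 2) ∣ (w n).map (Int.castRingHom ℚ) ∧
    ∀ m : ℕ, 2 ≤ m → m < n →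
      ¬ minpoly ℚ (ρ + ρ⁻¹ + 2) ∣ (w m).map (Int.castRingHom ℚ) := by
  have hN : 1 < 2 * n - 1 := by omega
  refine ⟨(minpoly_dvd_map_w_iff hρ hN (by omega)).2 (by omega), fun m _ hmn => ?_⟩
  rw [minpoly_dvd_map_w_iff hρ hN (by omega)]
  omega
end
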